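/- Let A and B be nonempty closed convex subsets of a real Hilbert space such that B is a closed affine subspace and P_A(B) ⊆ B. Then P_A P_B = P_{A∩B}; in particular A ∩ B ≠ ∅. -/

import Mathlib

open scoped RealInnerProductSpace

/-! The nearest point `p` of an affine subspace `B` to `x` satisfies Pythagoras,
`‖x - b‖² = ‖x - p‖² + ‖p - b‖²` for every `b ∈ B`, because `x - p` is orthogonal to the
direction of `B`. So on `A ∩ B` the distance to `x` is minimised exactly where the distance to
`p = P_B x` is, and `P_A p` lies in `A ∩ B` by hypothesis. -/

namespace AffineSubspace

variable {H : Type*} [NormedAddCommGroup H] [InnerProductSpace ℝ H]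

theorem inner_sub_eq_zero_of_forall_norm_le (s : AffineSubspace ℝ H) {x p b : H} (hp : p ∈ s)
    (hmin : ∀ y ∈ s, ‖x - p‖ ≤ ‖x - y‖) (hb : b ∈ s) : ⟪x - p, b - p⟫ = 0 := by
  have hinf : ‖x - p - 0‖ = ⨅ w : (s.direction : Set H), ‖x - p - w‖ := by
    refine le_antisymm (le_ciInf fun w => ?_) ?_
    · simpa [sub_sub, add_comm] using hmin _ (s.vadd_mem_of_mem_direction w.2 hp)
    · exact ciInf_le ⟨0, by rintro _ ⟨w, rfl⟩; positivity⟩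
        (⟨0, s.direction.zero_mem⟩ : (s.direction : Set H))
  simpa using (Submodule.norm_eq_iInf_iff_real_inner_eq_zero _ s.direction.zero_mem).1 hinf _
    (s.vsub_mem_direction hb hp)

theorem norm_sub_sq_eq_of_forall_norm_le (s : AffineSubspace ℝ H) {x p b : H} (hp : p ∈ s)
    (hmin : ∀ y ∈ s, ‖x - p‖ ≤ ‖x - y‖) (hb : b ∈ s) :
    ‖x - b‖ ^ 2 = ‖x - p‖ ^ 2 + ‖p - b‖ ^ 2 := by
  have horth : ⟪x - p, p - b⟫ = 0 := by
    rw [← neg_sub b p, inner_neg_right, s.inner_sub_eq_zero_of_forall_norm_le hp hmin hb, neg_zero]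
  rw [← sub_add_sub_cancel x p b, norm_add_sq_real, horth]
  ring

theorem norm_sub_le_of_nearest_of_mem_inter (s : AffineSubspace ℝ H) {A : Set H} {x p q : H}
    (hp : p ∈ s) (hmin : ∀ y ∈ s, ‖x - p‖ ≤ ‖x - y‖) (hq : q ∈ s)
    (hqmin : ∀ z ∈ A, ‖p - q‖ ≤ ‖p - z‖) {z : H} (hz : z ∈ A ∩ s) : ‖x - q‖ ≤ ‖x - z‖ := by
  obtain ⟨hzA, hzs⟩ := hz
  have hsq : ‖x - q‖ ^ 2 ≤ ‖x - z‖ ^ 2 := by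
    rw [s.norm_sub_sq_eq_of_forall_norm_le hp hmin hq,
      s.norm_sub_sq_eq_of_forall_norm_le hp hmin hzs]
    gcongr
    exact hqmin z hzA
  exact pow_le_pow_iff_left₀ (norm_nonneg _) (norm_nonneg _) two_ne_zero |>.1 hsq

end AffineSubspace

theorem projection_composition_constraint_reduction_general
    {H : Type*} [NormedAddCommGroup H] [InnerProductSpace ℝ H]
    (A B : Set H)
    (hBaff : ∃ S : AffineSubspace ℝ H, (S : Set H) = B)
    (PA PB : H → H)
    (hPA : ∀ x : H, PA x ∈ A ∧ ∀ y ∈ A, ‖x - PA x‖ ≤ ‖x - y‖)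
    (hPB : ∀ x : H, PB x ∈ B ∧ ∀ y ∈ B, ‖x - PB x‖ ≤ ‖x - y‖)
    (hmaps : ∀ b ∈ B, PA b ∈ B) :
    (A ∩ B).Nonempty ∧
      ∀ x : H, PA (PB x) ∈ A ∩ B ∧ ∀ z ∈ A ∩ B, ‖x - PA (PB x)‖ ≤ ‖x - z‖ := by
  obtain ⟨S, rfl⟩ := hBaff
  have hcomp (x : H) : PA (PB x) ∈ A ∩ S ∧ ∀ z ∈ A ∩ S, ‖x - PA (PB x)‖ ≤ ‖x - z‖ :=
    ⟨⟨(hPA _).1, hmaps _ (hPB x).1⟩,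
      fun _ hz ↦ S.norm_sub_le_of_nearest_of_mem_inter (hPB x).1 (hPB x).2
        (hmaps _ (hPB x).1) (hPA _).2 hz⟩
  exact ⟨⟨_, (hcomp 0).1⟩, hcomp⟩

/-- Constraint-reduction identity: if `A` is nonempty closed convex, `B` is a closed
affine subspace, and `P_A(B) ⊆ B`, then `A ∩ B ≠ ∅` and `P_A ∘ P_B = P_{A∩B}`. -/
theorem projection_composition_constraint_reduction
    {H : Type*} [NormedAddCommGroup H] [InnerProductSpace ℝ H] [CompleteSpace H]
    (A B : Set H)
    (hAne : A.Nonempty) (hAcl : IsClosed A) (hAconv : Convex ℝ A)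
    (hBcl : IsClosed B) (hBne : B.Nonempty)
    (hBaff : ∃ S : AffineSubspace ℝ H, (S : Set H) = B)
    (PA PB : H → H)
    (hPA : ∀ x : H, PA x ∈ A ∧ ∀ y ∈ A, ‖x - PA x‖ ≤ ‖x - y‖)
    (hPB : ∀ x : H, PB x ∈ B ∧ ∀ y ∈ B, ‖x - PB x‖ ≤ ‖x - y‖)
    (hmaps : ∀ b ∈ B, PA b ∈ B) :
    (A ∩ B).Nonempty ∧
      ∀ x : H, PA (PB x) ∈ A ∩ B ∧ ∀ z ∈ A ∩ B, ‖x - PA (PB x)‖ ≤ ‖x - z‖ :=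
  projection_composition_constraint_reduction_general A B hBaff PA PB hPA hPB hmaps
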